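/- arXiv:1408.0243 — 2 statements merged into one kernel-verified Lean document; each statement's English description precedes it below -/
import Mathlib

section
/- For arbitrary real constants c₁, c₂, c₃ with c₂ ≠ 0, on the domain where t + c₁ > 0 and c₂x + c₃ ≠ 0, the functions a(x,t) = 4(t+c₁)/(c₂x+c₃)², b(x,t) = 4c₂²(t+c₁)³/(c₂x+c₃)⁴, c(x,t) = 4c₂(t+c₁)²/(c₂x+c₃)³ satisfy the Einstein Walker PDE system. -/
/-!
Write `s = t + c₁` and `u = c₂ x + c₃`. The three functions are monomials `k sᵐ / uⁿ`, and
`∂ₓ`, `∂ₜ` send such a monomial to another one (raising `n`, resp. lowering `m`, by one).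
Since `b = a (c₂ s / u)²` and `c = a (c₂ s / u)`, every term of each of the six equations has
the same bidegree, so once all derivatives are computed each equation is a rational identity
in `s`, `u`, `c₂`, checked by clearing denominators.
-/

/-- Partial derivative with respect to the first variable `x`. -/
noncomputable def pdx (f : ℝ → ℝ → ℝ) (x t : ℝ) : ℝ := deriv (fun x' => f x' t) x

/-- Partial derivative with respect to the second variable `t`. -/
noncomputable def pdt (f : ℝ → ℝ → ℝ) (x t : ℝ) : ℝ := deriv (fun t' => f x t') t

/-- The six Einstein Walker PDEs for functions `a b c` of `(x,t)`, at the point `(x,t)`. -/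
def EinsteinWalker (a b c : ℝ → ℝ → ℝ) (x t : ℝ) : Prop :=
  pdx (pdx a) x t - pdt (pdt b) x t = 0 ∧
  pdt (pdx b) x t + pdx (pdx c) x t = 0 ∧
  pdt (pdx a) x t + pdt (pdt c) x t = 0 ∧
  pdx a x t * pdt c x t + pdt a x t * pdt b x t - pdt a x t * pdx c x t
    - (pdt c x t) ^ 2 + 2 * c x t * pdt (pdx a) x t + b x t * pdt (pdt a) x t
    - a x t * pdt (pdx c) x t = 0 ∧
  pdt a x t * pdx b x t - pdx c x t * pdt c x t + c x t * pdx (pdx a) x t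
    - a x t * pdx (pdx c) x t - c x t * pdt (pdx c) x t - b x t * pdt (pdt c) x t = 0 ∧
  pdx a x t * pdx b x t - pdx b x t * pdt c x t + pdt b x t * pdx c x t
    - (pdx c x t) ^ 2 + a x t * pdx (pdx b) x t + 2 * c x t * pdt (pdx b) x t
    - b x t * pdt (pdx c) x t = 0

noncomputable def ratMonomial (c₁ c₂ c₃ k : ℝ) (m n : ℕ) : ℝ → ℝ → ℝ :=
  fun x t => k * (t + c₁) ^ m / (c₂ * x + c₃) ^ n

lemma pdx_congr {f g : ℝ → ℝ → ℝ} {x t : ℝ}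
    (h : (fun x' => f x' t) =ᶠ[nhds x] fun x' => g x' t) : pdx f x t = pdx g x t :=
  h.deriv_eq

lemma pdt_congr {f g : ℝ → ℝ → ℝ} {x t : ℝ} (h : ∀ t', f x t' = g x t') :
    pdt f x t = pdt g x t := by
  simp only [pdt, h]

namespace ratMonomial

variable (c₁ c₂ c₃ k : ℝ) (m n : ℕ)

lemma pdx_eq {x : ℝ} (t : ℝ) (hu : c₂ * x + c₃ ≠ 0) :
    pdx (ratMonomial c₁ c₂ c₃ k m n) x t = ratMonomial c₁ c₂ c₃ (-(n * c₂ * k)) m (n + 1) x t := by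
  have hlin : HasDerivAt (fun x' => c₂ * x' + c₃) c₂ x := by
    simpa using ((hasDerivAt_id' x).const_mul c₂).add_const c₃
  have hder := (hasDerivAt_const x (k * (t + c₁) ^ m)).fun_div (hlin.fun_pow n) (pow_ne_zero n hu)
  simp only [pdx, ratMonomial]
  rw [hder.deriv]
  rcases n with _ | n
  · simp
  · rw [Nat.add_sub_cancel]
    field_simp
    ring

-- At `m = 0` the truncated `m - 1` is harmless: the coefficient `m * k` vanishes.
lemma pdt_eq (x t : ℝ) :
    pdt (ratMonomial c₁ c₂ c₃ k m n) x t = ratMonomial c₁ c₂ c₃ (m * k) (m - 1) n x t := by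
  have hder := ((((hasDerivAt_id' t).add_const c₁).fun_pow m).const_mul k).div_const
    ((c₂ * x + c₃) ^ n)
  simp only [pdt, ratMonomial]
  rw [hder.deriv]
  rcases m with _ | m
  · simp
  · rw [Nat.add_sub_cancel]
    push_cast
    ring

lemma pdx_pdx_eq {x : ℝ} (t : ℝ) (hu : c₂ * x + c₃ ≠ 0) :
    pdx (pdx (ratMonomial c₁ c₂ c₃ k m n)) x t
      = ratMonomial c₁ c₂ c₃ (-((n + 1 : ℕ) * c₂ * -(n * c₂ * k))) m (n + 1 + 1) x t := by
  have hnear : ∀ᶠ x' in nhds x, c₂ * x' + c₃ ≠ 0 :=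
    (continuous_const.mul continuous_id |>.add continuous_const).continuousAt.eventually_ne hu
  rw [pdx_congr (hnear.mono fun x' hx' => pdx_eq c₁ c₂ c₃ k m n t hx'), pdx_eq c₁ c₂ c₃ _ m (n + 1) t hu]

lemma pdt_pdx_eq {x : ℝ} (t : ℝ) (hu : c₂ * x + c₃ ≠ 0) :
    pdt (pdx (ratMonomial c₁ c₂ c₃ k m n)) x t
      = ratMonomial c₁ c₂ c₃ (m * -(n * c₂ * k)) (m - 1) (n + 1) x t := by
  rw [pdt_congr fun t' => pdx_eq c₁ c₂ c₃ k m n t' hu, pdt_eq]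

lemma pdt_pdt_eq (x t : ℝ) :
    pdt (pdt (ratMonomial c₁ c₂ c₃ k m n)) x t
      = ratMonomial c₁ c₂ c₃ ((m - 1 : ℕ) * (m * k)) (m - 1 - 1) n x t := by
  rw [pdt_congr fun t' => pdt_eq c₁ c₂ c₃ k m n x t', pdt_eq]

end ratMonomial

theorem stmt4_general (c₁ c₂ c₃ : ℝ) :
    ∀ x t : ℝ, 0 < t + c₁ → c₂ * x + c₃ ≠ 0 →
      EinsteinWalker (fun x t => 4 * (t + c₁) / (c₂ * x + c₃) ^ 2)
        (fun x t => 4 * c₂ ^ 2 * (t + c₁) ^ 3 / (c₂ * x + c₃) ^ 4)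
        (fun x t => 4 * c₂ * (t + c₁) ^ 2 / (c₂ * x + c₃) ^ 3) x t := by
  intro x t _ hu
  have ha : (fun x t => 4 * (t + c₁) / (c₂ * x + c₃) ^ 2) = ratMonomial c₁ c₂ c₃ 4 1 2 := by
    unfold ratMonomial
    simp only [pow_one]
  rw [ha]
  change EinsteinWalker _ (ratMonomial c₁ c₂ c₃ (4 * c₂ ^ 2) 3 4)
    (ratMonomial c₁ c₂ c₃ (4 * c₂) 2 3) x t
  simp only [EinsteinWalker, ratMonomial.pdx_pdx_eq, ratMonomial.pdt_pdx_eq, ratMonomial.pdt_pdt_eq,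
    ratMonomial.pdx_eq, ratMonomial.pdt_eq, hu, ne_eq, not_false_eq_true]
  unfold ratMonomial
  norm_num
  refine ⟨?_, ?_, ?_, ?_, ?_, ?_⟩ <;>
  · field_simp
    ring

theorem stmt4 (c₁ c₂ c₃ : ℝ) (hc₂ : c₂ ≠ 0) :
    ∀ x t : ℝ, 0 < t + c₁ → c₂ * x + c₃ ≠ 0 →
      EinsteinWalker (fun x t => 4 * (t + c₁) / (c₂ * x + c₃) ^ 2)
        (fun x t => 4 * c₂ ^ 2 * (t + c₁) ^ 3 / (c₂ * x + c₃) ^ 4)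
        (fun x t => 4 * c₂ * (t + c₁) ^ 2 / (c₂ * x + c₃) ^ 3) x t :=
  stmt4_general c₁ c₂ c₃
end

section
/- For arbitrary real constants c₁, c₂, c₃, on the domain where t ≠ 0, the functions b(x,t) = (c₁ + c₂t³)/t, c(x,t) = (c₁ + c₂t³)(x − c₃)/t², and a(x,t) = (c₁ + c₂t³)(x − c₃)²/t³ satisfy the Einstein Walker PDE system. -/
/-! The solution separates variables: `a = A(t) u²`, `b = B(t)`, `c = C(t) u` with `u = x - c₃` and
profiles `A, B, C = (c₁ + c₂ t³) / tᵏ` for `k = 3, 1, 2`. For such functions the `x`-derivatives are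
explicit and the six PDEs reduce to five ODEs for `A, B, C` (`b_xt + c_xx = 0` holds identically).
The ODEs only see the germs of the profiles at `t`, and near `t ≠ 0` these are the Laurent binomials
`c₁ t⁻ᵏ + c₂ t³⁻ᵏ`, whose derivatives are again Laurent binomials; what is left is an identity
between rational functions of `t`. -/

open Filter Topology

section Separable

variable (g : ℝ → ℝ)

theorem pdx_separable_sub_pow (c : ℝ) (n : ℕ) :
    pdx (fun x t => g t * (x - c) ^ n) = fun x t => (n * g t) * (x - c) ^ (n - 1) := by
  funext x t
  rw [pdx, ((((hasDerivAt_id' x).sub_const c).fun_pow n).const_mul (g t)).deriv]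
  ring

theorem pdt_separable (h : ℝ → ℝ) : pdt (fun x t => g t * h x) = fun x t => deriv g t * h x := by
  funext x t
  exact deriv_mul_const_field (h x)

end Separable

/-- The Einstein Walker system for `a = A(t) (x - x₀)²`, `b = B(t)`, `c = C(t) (x - x₀)`, with the
powers of `x - x₀` divided out. -/
def EinsteinWalkerReduced (A B C : ℝ → ℝ) (t : ℝ) : Prop :=
  2 * A t = deriv (deriv B) t ∧
  2 * deriv A t + deriv (deriv C) t = 0 ∧
  A t * deriv C t + deriv A t * deriv B t + 3 * deriv A t * C t - deriv C t ^ 2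
    + B t * deriv (deriv A) t = 0 ∧
  2 * A t * C t - 2 * C t * deriv C t - B t * deriv (deriv C) t = 0 ∧
  deriv B t * C t - C t ^ 2 - B t * deriv C t = 0

theorem EinsteinWalkerReduced.einsteinWalker {A B C : ℝ → ℝ} {t : ℝ}
    (h : EinsteinWalkerReduced A B C t) (x₀ x : ℝ) :
    EinsteinWalker (fun x t => A t * (x - x₀) ^ 2) (fun _ t => B t) (fun x t => C t * (x - x₀))
      x t := by
  obtain ⟨h₁, h₃, h₄, h₅, h₆⟩ := h
  have hb : (fun (_ : ℝ) t => B t) = fun x t => B t * (x - x₀) ^ 0 := by simp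
  have hc : (fun x t => C t * (x - x₀)) = fun x t => C t * (x - x₀) ^ 1 := by simp
  rw [hb, hc]
  simp only [EinsteinWalker, pdx_separable_sub_pow, pdt_separable, deriv_const_mul_field']
  refine ⟨?_, ?_, ?_, ?_, ?_, ?_⟩
  · linear_combination h₁
  · ring
  · linear_combination (x - x₀) * h₃
  · linear_combination (x - x₀) ^ 2 * h₄
  · linear_combination (x - x₀) * h₅
  · linear_combination h₆

theorem EinsteinWalkerReduced.congr {A B C A' B' C' : ℝ → ℝ} {t : ℝ} (hA : A =ᶠ[𝓝 t] A')
    (hB : B =ᶠ[𝓝 t] B') (hC : C =ᶠ[𝓝 t] C') :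
    EinsteinWalkerReduced A B C t ↔ EinsteinWalkerReduced A' B' C' t := by
  simp only [EinsteinWalkerReduced, hA.eq_of_nhds, hB.eq_of_nhds, hC.eq_of_nhds, hA.deriv_eq,
    hB.deriv_eq, hC.deriv_eq, hA.deriv.deriv_eq, hB.deriv.deriv_eq, hC.deriv.deriv_eq]

noncomputable def laurentBinomial (a b : ℝ) (m n : ℤ) (t : ℝ) : ℝ := a * t ^ m + b * t ^ n

section LaurentBinomial

variable {a b : ℝ} {m n : ℤ} {t : ℝ}

theorem hasDerivAt_laurentBinomial (ht : t ≠ 0) :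
    HasDerivAt (laurentBinomial a b m n)
      (laurentBinomial (a * m) (b * n) (m - 1) (n - 1) t) t := by
  refine (((hasDerivAt_zpow m t (.inl ht)).const_mul a).fun_add
    ((hasDerivAt_zpow n t (.inl ht)).const_mul b)).congr_deriv ?_
  simp only [laurentBinomial]
  ring

theorem deriv_laurentBinomial (ht : t ≠ 0) :
    deriv (laurentBinomial a b m n) t = laurentBinomial (a * m) (b * n) (m - 1) (n - 1) t :=
  (hasDerivAt_laurentBinomial ht).deriv

theorem deriv_laurentBinomial_eventuallyEq (ht : t ≠ 0) :
    deriv (laurentBinomial a b m n) =ᶠ[𝓝 t]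
      laurentBinomial (a * m) (b * n) (m - 1) (n - 1) := by
  filter_upwards [eventually_ne_nhds ht] with s hs
  exact deriv_laurentBinomial hs

theorem deriv_deriv_laurentBinomial (ht : t ≠ 0) :
    deriv (deriv (laurentBinomial a b m n)) t =
      laurentBinomial (a * m * (m - 1)) (b * n * (n - 1)) (m - 1 - 1) (n - 1 - 1) t := by
  rw [(deriv_laurentBinomial_eventuallyEq ht).deriv_eq, deriv_laurentBinomial ht]
  push_cast
  rfl

theorem div_pow_eventuallyEq_laurentBinomial (a b : ℝ) (j k : ℕ) (ht : t ≠ 0) :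
    (fun t => (a + b * t ^ j) / t ^ k) =ᶠ[𝓝 t] laurentBinomial a b (-k) (j - k) := by
  filter_upwards [eventually_ne_nhds ht] with s hs
  simp only [laurentBinomial, zpow_neg, zpow_sub₀ hs, zpow_natCast]
  field_simp

end LaurentBinomial

theorem einsteinWalkerReduced_laurentBinomial (c₁ c₂ : ℝ) {t : ℝ} (ht : t ≠ 0) :
    EinsteinWalkerReduced (laurentBinomial c₁ c₂ (-3) 0) (laurentBinomial c₁ c₂ (-1) 2)
      (laurentBinomial c₁ c₂ (-2) 1) t := by
  simp only [EinsteinWalkerReduced, deriv_laurentBinomial ht, deriv_deriv_laurentBinomial ht,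
    laurentBinomial]
  norm_num [zpow_neg]
  refine ⟨?_, ?_, ?_, ?_, ?_⟩ <;> field_simp <;> ring

theorem stmt5 (c₁ c₂ c₃ : ℝ) :
    ∀ x t : ℝ, t ≠ 0 →
      EinsteinWalker (fun x t => (c₁ + c₂ * t ^ 3) * (x - c₃) ^ 2 / t ^ 3)
        (fun _ t => (c₁ + c₂ * t ^ 3) / t)
        (fun x t => (c₁ + c₂ * t ^ 3) * (x - c₃) / t ^ 2) x t := by
  intro x t ht
  have hred : EinsteinWalkerReduced (fun t => (c₁ + c₂ * t ^ 3) / t ^ 3)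
      (fun t => (c₁ + c₂ * t ^ 3) / t ^ 1) (fun t => (c₁ + c₂ * t ^ 3) / t ^ 2) t := by
    rw [EinsteinWalkerReduced.congr (div_pow_eventuallyEq_laurentBinomial c₁ c₂ 3 3 ht)
      (div_pow_eventuallyEq_laurentBinomial c₁ c₂ 3 1 ht)
      (div_pow_eventuallyEq_laurentBinomial c₁ c₂ 3 2 ht)]
    convert einsteinWalkerReduced_laurentBinomial c₁ c₂ ht using 2 <;> norm_num
  convert hred.einsteinWalker c₃ x using 3 <;> ring
end
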